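/- For every non-autonomous dynamical system f on a compact metric space M and all i, j ∈ ℤ, one has H_i(f) = H_j(f); i.e., the sequence (H_i(f))_{i∈ℤ} is constant. -/

import Mathlib

open Filter Topology Set

variable {M : Type*} {N : Type*}

/-- The `n`-th composition `f_i^n = f_{i+n-1} ∘ ⋯ ∘ f_i` of a non-autonomous
dynamical system `f = (f_i)_{i ∈ ℤ}` of homeomorphisms of `M`. -/
def nsIter [TopologicalSpace M] (f : ℤ → M ≃ₜ M) (i : ℤ) : ℕ → M → M
  | 0 => id
  | n + 1 => (f (i + n)) ∘ nsIter f i n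

/-- `K` is an `(n, ε)`-spanning set for `f` at time `i`. -/
def IsSpanningSet [PseudoMetricSpace M] (f : ℤ → M ≃ₜ M) (i : ℤ) (n : ℕ) (ε : ℝ)
    (K : Set M) : Prop :=
  ∀ x : M, ∃ y ∈ K, ∀ j < n, dist (nsIter f i j x) (nsIter f i j y) < ε

/-- `E` is an `(n, ε)`-separated set for `f` at time `i`. -/
def IsSeparatedSet [PseudoMetricSpace M] (f : ℤ → M ≃ₜ M) (i : ℤ) (n : ℕ) (ε : ℝ)
    (E : Set M) : Prop :=
  ∀ x ∈ E, ∀ y ∈ E, x ≠ y → ∃ j < n, ε < dist (nsIter f i j x) (nsIter f i j y)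

/-- `r[n,i](ε,f)`: the smallest cardinality of a finite `(n, ε)`-spanning set at time `i`. -/
noncomputable def rSpan [PseudoMetricSpace M] (f : ℤ → M ≃ₜ M) (i : ℤ) (n : ℕ) (ε : ℝ) : ℕ :=
  sInf {k | ∃ K : Finset M, K.card = k ∧ IsSpanningSet f i n ε ↑K}

/-- `s[n,i](ε,f)`: the largest cardinality of an `(n, ε)`-separated set at time `i`. -/
noncomputable def sSep [PseudoMetricSpace M] (f : ℤ → M ≃ₜ M) (i : ℤ) (n : ℕ) (ε : ℝ) : ℕ :=
  sSup {k | ∃ E : Finset M, E.card = k ∧ IsSeparatedSet f i n ε ↑E}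

/-- `r[i](ε,f) = limsup_{n → ∞} (1/n) log r[n,i](ε,f)`. -/
noncomputable def rGrowth [PseudoMetricSpace M] (f : ℤ → M ≃ₜ M) (i : ℤ) (ε : ℝ) : EReal :=
  Filter.atTop.limsup fun n : ℕ => ((Real.log (rSpan f i n ε) / n : ℝ) : EReal)

/-- `s[i](ε,f) = limsup_{n → ∞} (1/n) log s[n,i](ε,f)`. -/
noncomputable def sGrowth [PseudoMetricSpace M] (f : ℤ → M ≃ₜ M) (i : ℤ) (ε : ℝ) : EReal :=
  Filter.atTop.limsup fun n : ℕ => ((Real.log (sSep f i n ε) / n : ℝ) : EReal)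

/-- The topological entropy `H_i(f) = lim_{ε → 0⁺} r[i](ε,f)`; since `ε ↦ r[i](ε,f)` is
antitone, this one-sided limit equals the supremum over `ε > 0`. -/
noncomputable def nsEntropy [PseudoMetricSpace M] (f : ℤ → M ≃ₜ M) (i : ℤ) : EReal :=
  ⨆ (ε : ℝ) (_ : 0 < ε), rGrowth f i ε

/-! The map `f i` carries an `(n + 1, ε)`-spanning set at time `i` to an `(n, ε)`-spanning set at
time `i + 1`; conversely, by uniform continuity of `(f i)⁻¹` on the compact space `M`, `(f i)⁻¹`
carries an `(n + 1, min ε δ)`-spanning set at time `i + 1` to an `(n + 1, ε)`-spanning set at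
time `i`. Hence `r[i+1](ε) ≤ r[i](ε)` and `r[i](ε) ≤ r[i+1](min ε δ)`, because the index shift
`n ↦ n + 1` does not change the upper linear growth rate of `log r[n,i]`. Taking the supremum over
`ε` gives `H_{i+1} = H_i`. -/

open LinearGrowth

lemma LinearGrowth.linearGrowthSup_comp_add_one_le {u : ℕ → EReal} (hu : ∃ᶠ n in atTop, 0 ≤ u n) :
    linearGrowthSup (fun n ↦ u (n + 1)) ≤ linearGrowthSup u := by
  have h_id : (linearGrowthSup fun n : ℕ ↦ (n : EReal)) = 1 := by
    simpa using linearGrowthSup_const_mul_self (a := (1 : EReal))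
  have h_succ : (linearGrowthSup fun n : ℕ ↦ ((n + 1 : ℕ) : EReal)) = 1 := by
    refine le_antisymm ?_ (h_id ▸ linearGrowthSup_monotone fun n ↦ by exact_mod_cast n.le_succ)
    exact h_id ▸ linearGrowthSup_le_of_eventually_le (b := 1) (EReal.coe_ne_top 1)
      (Eventually.of_forall fun n ↦ by push_cast; rfl)
  have h := linearGrowthSup_comp_le (v := (· + 1)) hu (by rw [h_succ]; exact one_ne_zero)
    (by rw [h_succ]; exact EReal.coe_ne_top 1) (tendsto_add_atTop_nat 1)
  rwa [h_succ, one_mul] at h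

lemma Real.log_natCast_le_log_natCast {a b : ℕ} (h : a ≤ b) : Real.log a ≤ Real.log b := by
  rcases a.eq_zero_or_pos with rfl | ha
  · simpa using Real.log_natCast_nonneg b
  · exact Real.log_le_log (by exact_mod_cast ha) (by exact_mod_cast h)

section NonAutonomous

lemma nsIter_succ_apply [TopologicalSpace M] (f : ℤ → M ≃ₜ M) (i : ℤ) (n : ℕ) (x : M) :
    nsIter f i (n + 1) x = nsIter f (i + 1) n (f i x) := by
  induction n with
  | zero => simp [nsIter]
  | succ n ih =>
    change f (i + (n + 1 : ℕ)) (nsIter f i (n + 1) x) = f (i + 1 + n) (nsIter f (i + 1) n (f i x))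
    rw [ih]
    congr 2
    push_cast
    ring

lemma continuous_nsIter [TopologicalSpace M] (f : ℤ → M ≃ₜ M) (i : ℤ) :
    ∀ n, Continuous (nsIter f i n)
  | 0 => continuous_id
  | n + 1 => (f (i + n)).continuous.comp (continuous_nsIter f i n)

variable [PseudoMetricSpace M] {f : ℤ → M ≃ₜ M} {i : ℤ} {n : ℕ} {ε : ℝ}

lemma rGrowth_eq_linearGrowthSup (f : ℤ → M ≃ₜ M) (i : ℤ) (ε : ℝ) :
    rGrowth f i ε = linearGrowthSup fun n ↦ (Real.log (rSpan f i n ε) : EReal) := by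
  simp only [rGrowth, linearGrowthSup, EReal.coe_div, EReal.coe_natCast]

lemma IsSpanningSet.image_succ {K : Set M} (hK : IsSpanningSet f i (n + 1) ε K) :
    IsSpanningSet f (i + 1) n ε (f i '' K) := by
  intro x
  obtain ⟨y, hy, hxy⟩ := hK ((f i).symm x)
  refine ⟨f i y, mem_image_of_mem _ hy, fun j hj ↦ ?_⟩
  simpa [nsIter_succ_apply] using hxy (j + 1) (by omega)

lemma IsSpanningSet.symm_image_pred {δ : ℝ} {K : Set M}
    (hδ : ∀ ⦃x y⦄, dist x y < δ → dist ((f i).symm x) ((f i).symm y) < ε)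
    (hK : IsSpanningSet f (i + 1) (n + 1) (min ε δ) K) :
    IsSpanningSet f i (n + 1) ε ((f i).symm '' K) := by
  intro x
  obtain ⟨y, hy, hxy⟩ := hK (f i x)
  refine ⟨(f i).symm y, mem_image_of_mem _ hy, fun j hj ↦ ?_⟩
  rcases j with _ | j
  · simpa [nsIter] using hδ ((hxy 0 n.succ_pos).trans_le (min_le_right _ _))
  · simpa [nsIter_succ_apply] using (hxy j (by omega)).trans_le (min_le_left _ _)

lemma rSpan_le_card {K : Finset M} (hK : IsSpanningSet f i n ε K) : rSpan f i n ε ≤ K.card :=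
  Nat.sInf_le ⟨K, rfl, hK⟩

lemma exists_finset_isSpanningSet [CompactSpace M] (f : ℤ → M ≃ₜ M) (i : ℤ) (n : ℕ)
    (hε : 0 < ε) : ∃ K : Finset M, IsSpanningSet f i n ε K := by
  obtain ⟨K, hK⟩ := isCompact_univ.elim_finite_subcover
    (fun y : M ↦ ⋂ j ∈ Finset.range n, {x | dist (nsIter f i j x) (nsIter f i j y) < ε})
    (fun y ↦ isOpen_biInter_finset fun j _ ↦
      isOpen_lt ((continuous_nsIter f i j).dist continuous_const) continuous_const)
    (fun x _ ↦ mem_iUnion.2 ⟨x, mem_iInter₂.2 fun j _ ↦ by simpa using hε⟩)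
  refine ⟨K, fun x ↦ ?_⟩
  obtain ⟨y, hy, hxy⟩ := mem_iUnion₂.1 (hK (mem_univ x))
  exact ⟨y, hy, fun j hj ↦ mem_iInter₂.1 hxy j (Finset.mem_range.2 hj)⟩

lemma exists_isSpanningSet_card_eq_rSpan [CompactSpace M] (f : ℤ → M ≃ₜ M) (i : ℤ) (n : ℕ)
    (hε : 0 < ε) : ∃ K : Finset M, K.card = rSpan f i n ε ∧ IsSpanningSet f i n ε K := by
  obtain ⟨K, hK⟩ := exists_finset_isSpanningSet f i n hε
  exact Nat.sInf_mem (s := {k | ∃ K : Finset M, K.card = k ∧ IsSpanningSet f i n ε K})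
    ⟨_, K, rfl, hK⟩

variable [CompactSpace M]

lemma rSpan_add_one_le (hε : 0 < ε) : rSpan f (i + 1) n ε ≤ rSpan f i (n + 1) ε := by
  classical
  obtain ⟨K, hcard, hK⟩ := exists_isSpanningSet_card_eq_rSpan f i (n + 1) hε
  calc rSpan f (i + 1) n ε ≤ (K.image (f i)).card :=
        rSpan_le_card (by simpa only [Finset.coe_image] using hK.image_succ)
    _ ≤ rSpan f i (n + 1) ε := hcard ▸ Finset.card_image_le

lemma exists_rSpan_le_rSpan_add_one (hε : 0 < ε) :
    ∃ ε' > 0, ∀ n, rSpan f i (n + 1) ε ≤ rSpan f (i + 1) (n + 1) ε' := by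
  classical
  obtain ⟨δ, hδ, hδε⟩ := Metric.uniformContinuous_iff.1
    (CompactSpace.uniformContinuous_of_continuous (f i).symm.continuous) ε hε
  refine ⟨min ε δ, lt_min hε hδ, fun n ↦ ?_⟩
  obtain ⟨K, hcard, hK⟩ := exists_isSpanningSet_card_eq_rSpan f (i + 1) (n + 1) (lt_min hε hδ)
  calc rSpan f i (n + 1) ε ≤ (K.image (f i).symm).card :=
        rSpan_le_card (by simpa only [Finset.coe_image] using hK.symm_image_pred hδε)
    _ ≤ rSpan f (i + 1) (n + 1) (min ε δ) := hcard ▸ Finset.card_image_le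

lemma rGrowth_add_one_le (hε : 0 < ε) : rGrowth f (i + 1) ε ≤ rGrowth f i ε := by
  rw [rGrowth_eq_linearGrowthSup, rGrowth_eq_linearGrowthSup]
  calc _ ≤ linearGrowthSup fun n ↦ (Real.log (rSpan f i (n + 1) ε) : EReal) :=
        linearGrowthSup_monotone fun n ↦
          EReal.coe_le_coe_iff.2 (Real.log_natCast_le_log_natCast (rSpan_add_one_le hε))
    _ ≤ _ := linearGrowthSup_comp_add_one_le (u := fun n ↦ (Real.log (rSpan f i n ε) : EReal))
        (Frequently.of_forall fun n ↦ EReal.coe_nonneg.2 (Real.log_natCast_nonneg _))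

lemma exists_rGrowth_le_rGrowth_add_one (hε : 0 < ε) :
    ∃ ε' > 0, rGrowth f i ε ≤ rGrowth f (i + 1) ε' := by
  obtain ⟨ε', hε', hle⟩ := exists_rSpan_le_rSpan_add_one (f := f) (i := i) hε
  refine ⟨ε', hε', ?_⟩
  simp only [rGrowth_eq_linearGrowthSup]
  refine linearGrowthSup_eventually_monotone ((eventually_ge_atTop 1).mono fun n hn ↦ ?_)
  obtain ⟨n, rfl⟩ := Nat.exists_eq_add_of_le' hn
  exact EReal.coe_le_coe_iff.2 (Real.log_natCast_le_log_natCast (hle n))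

lemma nsEntropy_add_one (f : ℤ → M ≃ₜ M) (i : ℤ) : nsEntropy f (i + 1) = nsEntropy f i :=
  le_antisymm
    (iSup₂_le fun ε hε ↦ (rGrowth_add_one_le hε).trans (le_iSup₂_of_le ε hε le_rfl))
    (iSup₂_le fun _ hε ↦
      let ⟨ε', hε', h⟩ := exists_rGrowth_le_rGrowth_add_one hε
      h.trans (le_iSup₂_of_le ε' hε' le_rfl))

end NonAutonomous

/-- for every non-autonomous dynamical system `f` on a compact metric space `M`
and all `i, j ∈ ℤ`, `H_i(f) = H_j(f)`: the sequence `(H_i(f))_{i ∈ ℤ}` is constant. -/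
theorem nsEntropy_eq_nsEntropy [MetricSpace M] [CompactSpace M]
    (f : ℤ → M ≃ₜ M) (i j : ℤ) :
    nsEntropy f i = nsEntropy f j := by
  have h : Function.Periodic (nsEntropy f) 1 := nsEntropy_add_one f
  simpa using (h.int_mul_eq i).trans (h.int_mul_eq j).symm
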